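/- A point p of the product of simplices is a fixed point of the Nash map T if and only if p is a Nash equilibrium: pv_i(p) ≥ pv_i(p with p_i replaced by δ_{f_i}) for every player i and every pure strategy f_i. -/

import Mathlib

namespace QuantumNash


variable {n : ℕ} {S : Fin n → Type*}

/-- Multilinear (mixed-strategy) extension of the pure payoff `u i`. -/
def pv [∀ i, Fintype (S i)] (u : Fin n → (∀ i, S i) → ℝ)
    (i : Fin n) (p : ∀ j, S j → ℝ) : ℝ :=
  ∑ t : ∀ j, S j, (∏ j, p j (t j)) * u i t

/-- The vertex (pure strategy) `δ_{f}` of the simplex `Δ(S i)`. -/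
def pureStrat [∀ i, DecidableEq (S i)] (i : Fin n) (f : S i) : S i → ℝ :=
  fun g => if g = f then 1 else 0

/-- Nash's gain functions `φ_{i f_i}(p) = max(0, pv_i(p←δ_{f_i}) − pv_i(p))`. -/
noncomputable def gain [∀ i, Fintype (S i)] [∀ i, DecidableEq (S i)] (u : Fin n → (∀ i, S i) → ℝ)
    (i : Fin n) (f : S i) (p : ∀ j, S j → ℝ) : ℝ :=
  max 0 (pv u i (Function.update p i (pureStrat i f)) - pv u i p)

/-- The Nash map `T`. -/
noncomputable def nashMap [∀ i, Fintype (S i)] [∀ i, DecidableEq (S i)] (u : Fin n → (∀ i, S i) → ℝ)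
    (p : ∀ j, S j → ℝ) : ∀ j, S j → ℝ :=
  fun i f => (p i f + gain u i f p) / (1 + ∑ g, gain u i g p)

/-- The product of simplices `Δ(S_1) × ... × Δ(S_n)`. -/
def simplexProd [∀ i, Fintype (S i)] : Set (∀ i, S i → ℝ) :=
  {p | ∀ i, p i ∈ stdSimplex ℝ (S i)}

/-!
At a fixed point, `T_i(p) = p_i` says `φ_{i f}(p) = p_i(f) · Σ_g φ_{i g}(p)` for every `f`.
Since `pv_i(p)` is the `p_i`-weighted average of the payoffs `pv_i(p ← δ_f)`, some `f` in the
support of `p_i` does no better than `p_i`; its gain vanishes, which forces `Σ_g φ_{i g}(p) = 0`,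
so no pure deviation is profitable. Conversely, when all gains vanish `T` is the identity at `p`.
-/

theorem exists_pos_le_of_sum_mul_le {ι : Type*} [Fintype ι] {w x : ι → ℝ} {c : ℝ}
    (hw : w ∈ stdSimplex ℝ ι) (hc : ∑ i, w i * x i ≤ c) : ∃ i, 0 < w i ∧ x i ≤ c := by
  by_contra! h
  obtain ⟨j, hj⟩ : ∃ j, 0 < w j := by
    by_contra! h0
    have : ∑ i, w i = 0 := Finset.sum_eq_zero fun i _ => le_antisymm (h0 i) (hw.1 i)
    simp [hw.2] at this
  have hlt : ∑ i, w i * c < ∑ i, w i * x i := by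
    refine Finset.sum_lt_sum (fun i _ => ?_) ⟨j, Finset.mem_univ j, ?_⟩
    · rcases (hw.1 i).eq_or_lt with h0 | hpos
      · simp [← h0]
      · exact mul_le_mul_of_nonneg_left (h i hpos).le hpos.le
    · exact mul_lt_mul_of_pos_left (h j hj) hj
  rw [← Finset.sum_mul, hw.2, one_mul] at hlt
  linarith

section

variable [∀ i, DecidableEq (S i)] (i : Fin n) (p : ∀ j, S j → ℝ)

theorem prod_update_pureStrat (f : S i) (t : ∀ j, S j) :
    ∏ j, Function.update p i (pureStrat i f) j (t j) =
      pureStrat i f (t i) * ∏ j ∈ Finset.univ.erase i, p j (t j) := by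
  rw [← Finset.mul_prod_erase _ _ (Finset.mem_univ i)]
  congr 1
  · simp
  · exact Finset.prod_congr rfl fun j hj => by
      rw [Function.update_of_ne (Finset.ne_of_mem_erase hj)]

variable [∀ i, Fintype (S i)] (u : Fin n → (∀ i, S i) → ℝ)

theorem sum_mul_pv_update_pureStrat :
    ∑ f, p i f * pv u i (Function.update p i (pureStrat i f)) = pv u i p := by
  simp_rw [pv, Finset.mul_sum, prod_update_pureStrat]
  rw [Finset.sum_comm]
  refine Finset.sum_congr rfl fun t _ => ?_
  rw [← Finset.mul_prod_erase _ (fun j => p j (t j)) (Finset.mem_univ i)]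
  simp [pureStrat, mul_assoc, ite_mul, Finset.sum_ite_eq]

theorem gain_nonneg (f : S i) : 0 ≤ gain u i f p := le_max_left _ _

theorem gain_eq_zero_iff (f : S i) :
    gain u i f p = 0 ↔ pv u i (Function.update p i (pureStrat i f)) ≤ pv u i p := by
  rw [gain, max_eq_left_iff, sub_nonpos]

theorem exists_pos_gain_eq_zero (hp : p i ∈ stdSimplex ℝ (S i)) :
    ∃ f, 0 < p i f ∧ gain u i f p = 0 := by
  simp_rw [gain_eq_zero_iff]
  exact exists_pos_le_of_sum_mul_le hp (sum_mul_pv_update_pureStrat i p u).le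

theorem nashMap_apply_eq_self_iff :
    nashMap u p i = p i ↔ ∀ f, gain u i f p = p i f * ∑ g, gain u i g p := by
  have hpos : 0 < 1 + ∑ g, gain u i g p :=
    add_pos_of_pos_of_nonneg one_pos (Finset.sum_nonneg fun g _ => gain_nonneg i p u g)
  simp only [funext_iff, nashMap, div_eq_iff hpos.ne']
  refine forall_congr' fun f => ?_
  constructor <;> intro h <;> linarith

theorem nashMap_apply_eq_self_iff_forall_gain_eq_zero (hp : p i ∈ stdSimplex ℝ (S i)) :
    nashMap u p i = p i ↔ ∀ f, gain u i f p = 0 := by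
  rw [nashMap_apply_eq_self_iff]
  refine ⟨fun hfix => ?_, fun h f => by simp [h]⟩
  obtain ⟨f, hf, hf0⟩ := exists_pos_gain_eq_zero i p u hp
  have hsum : ∑ g, gain u i g p = 0 := by simpa [hf0, hf.ne'] using hfix f
  intro g
  simpa [hsum] using hfix g

end

theorem nashMap_fixedPoint_iff_equilibrium_general
    [∀ i, Fintype (S i)] [∀ i, DecidableEq (S i)]
    (u : Fin n → (∀ i, S i) → ℝ) (p : ∀ i, S i → ℝ) (hp : p ∈ simplexProd (S := S)) :
    nashMap u p = p ↔
      ∀ (i : Fin n) (f : S i),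
        pv u i (Function.update p i (pureStrat i f)) ≤ pv u i p := by
  rw [funext_iff]
  refine forall_congr' fun i => ?_
  rw [nashMap_apply_eq_self_iff_forall_gain_eq_zero i p u (hp i)]
  simp only [gain_eq_zero_iff]

/-- a point of the product of simplices is a fixed point of the Nash map
if and only if it is a Nash equilibrium (no profitable pure-strategy deviation). -/
theorem nashMap_fixedPoint_iff_equilibrium
    [∀ i, Fintype (S i)] [∀ i, DecidableEq (S i)] [∀ i, Nonempty (S i)]
    (u : Fin n → (∀ i, S i) → ℝ) (p : ∀ i, S i → ℝ) (hp : p ∈ simplexProd (S := S)) :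
    nashMap u p = p ↔
      ∀ (i : Fin n) (f : S i),
        pv u i (Function.update p i (pureStrat i f)) ≤ pv u i p :=
  nashMap_fixedPoint_iff_equilibrium_general u p hp

end QuantumNash
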